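/- arXiv:0904.3524 — 6 statements merged into one kernel-verified Lean document; each statement's English description precedes it below -/
import Mathlib

section
/- For vectors A, B, C in R^4 with A and B nonzero, letting alpha be the angle between A and B and C^perp the component of C orthogonal to the plane spanned by A and B, the iterated triple product satisfies [A, B, [A,B,C]] = -|A|^2 |B|^2 sin^2(alpha) C^perp. -/
/-! Since `trip A B` is linear and kills `A` and `B`, it only sees the component `C⊥` of `C`.
Expanding the determinants gives the four-dimensional analogue of the `BAC-CAB` rule,
`[A,B,[A,B,D]] = a A + b B - (‖A‖²‖B‖² - ⟪A,B⟫²) D` with `a, b` linear in `⟪A,D⟫, ⟪B,D⟫`,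
so for `D = C⊥` only the last term survives; and `‖A‖²‖B‖² - ⟪A,B⟫² = ‖A‖²‖B‖² sin² α`
because `⟪A,B⟫ = ‖A‖‖B‖ cos α`. -/

open scoped RealInnerProductSpace

noncomputable section

abbrev E4 := EuclideanSpace ℝ (Fin 4)

/-- The triple product `[A,B,C]` in `ℝ⁴`: the vector whose `i`-th component is the
determinant of the matrix with rows `A, B, C, eᵢ`; equivalently the unique vector with
`⟪[A,B,C], X⟫ = det (A,B,C,X)` for all `X`. -/
def trip (A B C : E4) : E4 :=
  WithLp.toLp 2 (fun i => Matrix.det (Matrix.of ![(A : Fin 4 → ℝ), (B : Fin 4 → ℝ), (C : Fin 4 → ℝ), Pi.single i 1]))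

theorem Matrix.det_fin_four {R : Type*} [CommRing R] (M : Matrix (Fin 4) (Fin 4) R) :
    M.det =
      M 0 0 * (M 1 1 * M 2 2 * M 3 3 - M 1 1 * M 2 3 * M 3 2 - M 1 2 * M 2 1 * M 3 3
        + M 1 2 * M 2 3 * M 3 1 + M 1 3 * M 2 1 * M 3 2 - M 1 3 * M 2 2 * M 3 1)
      - M 0 1 * (M 1 0 * M 2 2 * M 3 3 - M 1 0 * M 2 3 * M 3 2 - M 1 2 * M 2 0 * M 3 3
        + M 1 2 * M 2 3 * M 3 0 + M 1 3 * M 2 0 * M 3 2 - M 1 3 * M 2 2 * M 3 0)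
      + M 0 2 * (M 1 0 * M 2 1 * M 3 3 - M 1 0 * M 2 3 * M 3 1 - M 1 1 * M 2 0 * M 3 3
        + M 1 1 * M 2 3 * M 3 0 + M 1 3 * M 2 0 * M 3 1 - M 1 3 * M 2 1 * M 3 0)
      - M 0 3 * (M 1 0 * M 2 1 * M 3 2 - M 1 0 * M 2 2 * M 3 1 - M 1 1 * M 2 0 * M 3 2
        + M 1 1 * M 2 2 * M 3 0 + M 1 2 * M 2 0 * M 3 1 - M 1 2 * M 2 1 * M 3 0) := by
  rw [Matrix.det_succ_row_zero, Fin.sum_univ_four]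
  simp [Matrix.det_fin_three, Fin.succAbove, Fin.lt_def]
  ring

theorem InnerProductGeometry.norm_sq_mul_norm_sq_mul_sin_angle_sq {V : Type*}
    [NormedAddCommGroup V] [InnerProductSpace ℝ V] (x y : V) :
    ‖x‖ ^ 2 * ‖y‖ ^ 2 * Real.sin (angle x y) ^ 2 = ‖x‖ ^ 2 * ‖y‖ ^ 2 - ⟪x, y⟫ ^ 2 := by
  rw [← cos_angle_mul_norm_mul_norm x y]
  linear_combination (‖x‖ ^ 2 * ‖y‖ ^ 2) * Real.sin_sq_add_cos_sq (angle x y)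

theorem trip_eq (A B C : E4) :
    trip A B C =
      !₂[-A 1 * B 2 * C 3 + A 1 * B 3 * C 2 + A 2 * B 1 * C 3
          - A 2 * B 3 * C 1 - A 3 * B 1 * C 2 + A 3 * B 2 * C 1,
        A 0 * B 2 * C 3 - A 0 * B 3 * C 2 - A 2 * B 0 * C 3
          + A 2 * B 3 * C 0 + A 3 * B 0 * C 2 - A 3 * B 2 * C 0,
        -A 0 * B 1 * C 3 + A 0 * B 3 * C 1 + A 1 * B 0 * C 3
          - A 1 * B 3 * C 0 - A 3 * B 0 * C 1 + A 3 * B 1 * C 0,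
        A 0 * B 1 * C 2 - A 0 * B 2 * C 1 - A 1 * B 0 * C 2
          + A 1 * B 2 * C 0 + A 2 * B 0 * C 1 - A 2 * B 1 * C 0] := by
  ext i
  fin_cases i <;> simp [trip, Matrix.det_fin_four] <;> ring

theorem trip_add_right (A B C D : E4) : trip A B (C + D) = trip A B C + trip A B D := by
  ext i
  fin_cases i <;> simp [trip_eq] <;> ring

theorem trip_smul_right (A B C : E4) (c : ℝ) : trip A B (c • C) = c • trip A B C := by
  ext i
  fin_cases i <;> simp [trip_eq] <;> ring

theorem trip_self_left (A B : E4) : trip A B A = 0 := by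
  ext i
  exact Matrix.det_zero_of_row_eq (i := 0) (j := 2) (by decide) rfl

theorem trip_self_right (A B : E4) : trip A B B = 0 := by
  ext i
  exact Matrix.det_zero_of_row_eq (i := 1) (j := 2) (by decide) rfl

theorem trip_eq_zero_of_mem_span {A B D : E4} (hD : D ∈ Submodule.span ℝ {A, B}) :
    trip A B D = 0 := by
  obtain ⟨a, b, rfl⟩ := Submodule.mem_span_pair.mp hD
  simp only [trip_add_right, trip_smul_right, trip_self_left, trip_self_right, smul_zero,
    add_zero]

theorem trip_starProjection_orthogonal_span (A B C : E4) :
    trip A B ((Submodule.span ℝ {A, B})ᗮ.starProjection C) = trip A B C := by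
  set K := Submodule.span ℝ {A, B}
  conv_rhs => rw [← K.starProjection_add_starProjection_orthogonal C]
  rw [trip_add_right, trip_eq_zero_of_mem_span (K.starProjection_apply_mem C), zero_add]

theorem trip_trip (A B D : E4) :
    trip A B (trip A B D) =
      (‖B‖ ^ 2 * ⟪A, D⟫ - ⟪A, B⟫ * ⟪B, D⟫) • A + (‖A‖ ^ 2 * ⟪B, D⟫ - ⟪A, B⟫ * ⟪A, D⟫) • B
        - (‖A‖ ^ 2 * ‖B‖ ^ 2 - ⟪A, B⟫ ^ 2) • D := by
  ext i
  fin_cases i <;>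
    simp [trip_eq, EuclideanSpace.real_norm_sq_eq, PiLp.inner_apply, Fin.sum_univ_four] <;> ring

theorem trip_trip_of_inner_eq_zero {A B D : E4} (hA : ⟪A, D⟫ = 0) (hB : ⟪B, D⟫ = 0) :
    trip A B (trip A B D) = -(‖A‖ ^ 2 * ‖B‖ ^ 2 - ⟪A, B⟫ ^ 2) • D := by
  rw [trip_trip, hA, hB]
  module

theorem trip_trip_eq_general (A B C : E4) :
    trip A B (trip A B C) =
      -((‖A‖ ^ 2 * ‖B‖ ^ 2 * Real.sin (InnerProductGeometry.angle A B) ^ 2) •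
        ((Submodule.orthogonalProjectionOnto ((Submodule.span ℝ {A, B})ᗮ) C : (Submodule.span ℝ {A, B} : Submodule ℝ E4)ᗮ) : E4)) := by
  set K := Submodule.span ℝ {A, B}
  have hP : Kᗮ.starProjection C ∈ Kᗮ := Kᗮ.starProjection_apply_mem C
  have hAP := K.inner_right_of_mem_orthogonal (Submodule.subset_span (Set.mem_insert A {B})) hP
  have hBP := K.inner_right_of_mem_orthogonal (Submodule.subset_span (Set.mem_insert_of_mem A rfl)) hP
  rw [← Submodule.starProjection_apply, ← trip_starProjection_orthogonal_span A B C,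
    trip_trip_of_inner_eq_zero hAP hBP, InnerProductGeometry.norm_sq_mul_norm_sq_mul_sin_angle_sq,
    neg_smul]

/-- For nonzero `A, B ∈ ℝ⁴`, with `α` the angle between `A` and `B` and `C⊥` the orthogonal
projection of `C` onto the orthogonal complement of `span{A,B}`,
`[A,B,[A,B,C]] = -‖A‖² ‖B‖² sin²(α) C⊥`. -/
theorem trip_trip_eq (A B C : E4) (hA : A ≠ 0) (hB : B ≠ 0) :
    trip A B (trip A B C) =
      -((‖A‖ ^ 2 * ‖B‖ ^ 2 * Real.sin (InnerProductGeometry.angle A B) ^ 2) •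
        ((Submodule.orthogonalProjectionOnto ((Submodule.span ℝ {A, B})ᗮ) C : (Submodule.span ℝ {A, B} : Submodule ℝ E4)ᗮ) : E4)) :=
  trip_trip_eq_general A B C
end
end

section
/- For vectors A, B in R^4, the norm of the triple product satisfies |[A,B,C]| = |A| |B| |C^perp| sin(alpha), where alpha is the angle between A and B and C^perp is the component of C orthogonal to span{A,B}. -/
/-! Adding multiples of `A` and `B` to `C` does not change the determinants defining `[A,B,C]`,
so `C` may be replaced by `C⊥`. Expanding the determinants, `‖[A,B,C]‖²` is the Gram determinant
of `A, B, C`, which for `C⊥ ⊥ A, B` factors as `(‖A‖²‖B‖² - ⟪A,B⟫²) ‖C⊥‖²`, and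
`‖A‖²‖B‖² - ⟪A,B⟫² = (‖A‖ ‖B‖ sin α)²`. -/

open scoped RealInnerProductSpace

noncomputable section

namespace Matrix

theorem det_fin_four_s4 {R : Type*} [CommRing R] (M : Matrix (Fin 4) (Fin 4) R) :
    M.det =
      M 0 0 * (M 1 1 * (M 2 2 * M 3 3 - M 2 3 * M 3 2) - M 1 2 * (M 2 1 * M 3 3 - M 2 3 * M 3 1)
        + M 1 3 * (M 2 1 * M 3 2 - M 2 2 * M 3 1))
      - M 0 1 * (M 1 0 * (M 2 2 * M 3 3 - M 2 3 * M 3 2) - M 1 2 * (M 2 0 * M 3 3 - M 2 3 * M 3 0)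
        + M 1 3 * (M 2 0 * M 3 2 - M 2 2 * M 3 0))
      + M 0 2 * (M 1 0 * (M 2 1 * M 3 3 - M 2 3 * M 3 1) - M 1 1 * (M 2 0 * M 3 3 - M 2 3 * M 3 0)
        + M 1 3 * (M 2 0 * M 3 1 - M 2 1 * M 3 0))
      - M 0 3 * (M 1 0 * (M 2 1 * M 3 2 - M 2 2 * M 3 1) - M 1 1 * (M 2 0 * M 3 2 - M 2 2 * M 3 0)
        + M 1 2 * (M 2 0 * M 3 1 - M 2 1 * M 3 0)) := by
  rw [det_succ_row_zero]
  simp only [Fin.sum_univ_succ, det_fin_three, submatrix_apply, Fin.succAbove, Fin.succ_zero_eq_one,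
    Fin.succ_one_eq_two, Fin.castSucc_zero, Fin.castSucc_one, Fin.reduceSucc, Fin.reduceCastSucc,
    Fin.isValue, Fin.coe_ofNat_eq_mod, Nat.zero_mod, Fin.val_succ, Fin.succ_pos, Fin.lt_one_iff,
    Fin.reduceEq, Fin.reduceLT, lt_self_iff_false, not_lt_zero, ↓reduceIte, Finset.univ_unique,
    Fin.default_eq_zero, Fin.val_eq_zero, Finset.sum_singleton, pow_zero, pow_one, zero_add,
    one_mul, neg_mul]
  ring

theorem det_updateRow_add_smul_add_smul_self {n R : Type*} [DecidableEq n] [Fintype n]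
    [CommRing R] (M : Matrix n n R) {i j k : n} (hij : i ≠ j) (hik : i ≠ k) (a b : R) :
    (M.updateRow i (M i + a • M j + b • M k)).det = M.det := by
  simp [det_updateRow_add, det_updateRow_smul,
    det_zero_of_row_eq hij (updateRow_self.trans (updateRow_ne hij.symm).symm),
    det_zero_of_row_eq hik (updateRow_self.trans (updateRow_ne hik.symm).symm)]

theorem det_gram_of_inner_eq_zero {V : Type*} [NormedAddCommGroup V]
    [InnerProductSpace ℝ V] {A B P : V} (hA : ⟪A, P⟫ = 0) (hB : ⟪B, P⟫ = 0) :
    (gram ℝ ![A, B, P]).det = (⟪A, A⟫ * ⟪B, B⟫ - ⟪A, B⟫ * ⟪A, B⟫) * ⟪P, P⟫ := by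
  rw [det_fin_three]
  simp only [gram_apply, cons_val_zero, cons_val_one, cons_val_two, head_cons, tail_cons,
    real_inner_comm A P, real_inner_comm B P, real_inner_comm A B, hA, hB]
  ring

end Matrix

theorem exists_eq_smul_add_smul_add_starProjection_orthogonal {V : Type*}
    [NormedAddCommGroup V] [InnerProductSpace ℝ V] (A B C : V)
    [(Submodule.span ℝ {A, B}).HasOrthogonalProjection] :
    ∃ a b : ℝ, C = a • A + b • B + (Submodule.span ℝ {A, B})ᗮ.starProjection C := by
  obtain ⟨a, b, hab⟩ :=
    Submodule.mem_span_pair.mp ((Submodule.span ℝ {A, B}).starProjection_apply_mem C)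
  exact ⟨a, b, by rw [hab, Submodule.starProjection_add_starProjection_orthogonal]⟩

theorem trip_smul_add_smul_add (A B P : E4) (a b : ℝ) :
    trip A B (a • A + b • B + P) = trip A B P := by
  ext i
  set M := Matrix.of ![(A : Fin 4 → ℝ), B, P, Pi.single i 1]
  have hM : Matrix.of ![(A : Fin 4 → ℝ), B, a • A + b • B + P, Pi.single i 1] =
      M.updateRow 2 (M 2 + a • M 0 + b • M 1) := by
    ext r c
    fin_cases r <;> simp [M, Matrix.updateRow_apply, add_assoc, add_comm]
  simp only [trip, PiLp.toLp_apply, WithLp.ofLp_add, WithLp.ofLp_smul, hM]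
  exact M.det_updateRow_add_smul_add_smul_self (by decide) (by decide) a b

theorem norm_trip_sq (A B C : E4) : ‖trip A B C‖ ^ 2 = (Matrix.gram ℝ ![A, B, C]).det := by
  rw [← real_inner_self_eq_norm_sq, Matrix.det_fin_three]
  simp only [trip, Matrix.det_fin_four_s4, PiLp.inner_apply, RCLike.inner_apply, conj_trivial,
    Fin.sum_univ_four, Matrix.gram_apply, Matrix.of_apply, Matrix.cons_val', Matrix.cons_val,
    Matrix.cons_val_zero, Matrix.cons_val_one, Matrix.cons_val_fin_one, Pi.single_eq_same,
    Pi.single_eq_of_ne, ne_eq, Fin.reduceEq, not_false_eq_true]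
  ring

open InnerProductGeometry in
theorem norm_trip_of_inner_eq_zero {A B P : E4} (hA : ⟪A, P⟫ = 0) (hB : ⟪B, P⟫ = 0) :
    ‖trip A B P‖ = ‖A‖ * ‖B‖ * ‖P‖ * Real.sin (angle A B) := by
  have hgram : 0 ≤ ⟪A, A⟫ * ⟪B, B⟫ - ⟪A, B⟫ * ⟪A, B⟫ :=
    sub_nonneg.mpr (real_inner_mul_inner_self_le A B)
  rw [← Real.sqrt_sq (norm_nonneg (trip A B P)), norm_trip_sq,
    Matrix.det_gram_of_inner_eq_zero hA hB, Real.sqrt_mul hgram, ← sin_angle_mul_norm_mul_norm,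
    real_inner_self_eq_norm_sq, Real.sqrt_sq (norm_nonneg P)]
  ring

theorem norm_trip_general (A B C : E4) :
    ‖trip A B C‖ =
      ‖A‖ * ‖B‖ *
        ‖((Submodule.orthogonalProjectionOnto ((Submodule.span ℝ {A, B})ᗮ) C :
            (Submodule.span ℝ {A, B} : Submodule ℝ E4)ᗮ) : E4)‖ *
        Real.sin (InnerProductGeometry.angle A B) := by
  set K := Submodule.span ℝ {A, B}
  rw [Submodule.coe_orthogonalProjectionOnto_apply]
  have hP : Kᗮ.starProjection C ∈ Kᗮ := Kᗮ.starProjection_apply_mem C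
  obtain ⟨a, b, hC⟩ := exists_eq_smul_add_smul_add_starProjection_orthogonal A B C
  rw [hC, trip_smul_add_smul_add, ← hC]
  exact norm_trip_of_inner_eq_zero
    (Submodule.inner_right_of_mem_orthogonal (Submodule.subset_span (by simp)) hP)
    (Submodule.inner_right_of_mem_orthogonal (Submodule.subset_span (by simp)) hP)

/-- `‖[A,B,C]‖ = ‖A‖ ‖B‖ ‖C⊥‖ sin(α)`, where `α` is the angle between the nonzero vectors
`A` and `B` and `C⊥` is the component of `C` orthogonal to `span{A,B}`. -/
theorem norm_trip (A B C : E4) (hA : A ≠ 0) (hB : B ≠ 0) :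
    ‖trip A B C‖ =
      ‖A‖ * ‖B‖ *
        ‖((Submodule.orthogonalProjectionOnto ((Submodule.span ℝ {A, B})ᗮ) C :
            (Submodule.span ℝ {A, B} : Submodule ℝ E4)ᗮ) : E4)‖ *
        Real.sin (InnerProductGeometry.angle A B) :=
  norm_trip_general A B C
end
end

section
/- Let x, y be non-antipodal points on S^3 ⊂ R^4 and let V be tangent to S^3 at x. Then the triple product satisfies [y, P_{yx}V, y cos(alpha) - x] = [y, V, -x], where alpha is the spherical distance between x and y and P_{yx} is parallel transport. -/
open scoped RealInnerProductSpace

noncomputable section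

/-- Parallel transport along the minimal geodesic of `S³` from `x` to `y` of a tangent
vector `V` at `x`. -/
def Ptrans (x y V : E4) : E4 := V - (⟪V, y⟫ / (1 + ⟪x, y⟫)) • (x + y)

/-!
Each component of `[A,B,C]` is a determinant with rows `A, B, C`, so it does not change when a
multiple of one argument is added to another. `P_{yx}V` differs from `V` by a combination of
`x` and `y`, and `y cos α - x` differs from `-x` by a multiple of `y`, so all these
multiples can be removed.
-/

theorem trip_middle_add_smul_first (A B C : E4) (r : ℝ) : trip A (B + r • A) C = trip A B C := by
  ext k
  simp only [trip, PiLp.toLp_apply]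
  conv_rhs => rw [← Matrix.det_updateRow_add_smul_self _ (show (1 : Fin 4) ≠ 0 by decide) r]
  congr 1
  ext m l
  fin_cases m <;> simp [Matrix.updateRow_apply]

theorem trip_last_add_smul_first (A B C : E4) (r : ℝ) : trip A B (C + r • A) = trip A B C := by
  ext k
  simp only [trip, PiLp.toLp_apply]
  conv_rhs => rw [← Matrix.det_updateRow_add_smul_self _ (show (2 : Fin 4) ≠ 0 by decide) r]
  congr 1
  ext m l
  fin_cases m <;> simp [Matrix.updateRow_apply]

theorem trip_middle_add_smul_last (A B C : E4) (r : ℝ) : trip A (B + r • C) C = trip A B C := by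
  ext k
  simp only [trip, PiLp.toLp_apply]
  conv_rhs => rw [← Matrix.det_updateRow_add_smul_self _ (show (1 : Fin 4) ≠ 2 by decide) r]
  congr 1
  ext m l
  fin_cases m <;> simp [Matrix.updateRow_apply]

theorem trip_ptrans_general (x y V : E4) :
    trip y (Ptrans x y V) (Real.cos (Real.arccos ⟪x, y⟫) • y - x) = trip y V (-x) := by
  set c := ⟪V, y⟫ / (1 + ⟪x, y⟫)
  have hP : Ptrans x y V = V + c • -x + (-c) • y := by
    rw [Ptrans, smul_add, smul_neg, neg_smul]; abel
  have hlast : Real.cos (Real.arccos ⟪x, y⟫) • y - x = -x + Real.cos (Real.arccos ⟪x, y⟫) • y :=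
    sub_eq_neg_add _ _
  rw [hP, hlast, trip_last_add_smul_first, trip_middle_add_smul_first,
    trip_middle_add_smul_last]

/-- For non-antipodal `x, y ∈ S³` and `V` tangent at `x`, with `α = arccos⟪x,y⟫`,
the triple product satisfies `[y, P_{yx}V, y cos α - x] = [y, V, -x]`. -/
theorem trip_ptrans (x y V : E4) (hx : ‖x‖ = 1) (hy : ‖y‖ = 1)
    (hxy : ⟪x, y⟫ ≠ -1) (hV : ⟪V, x⟫ = 0) :
    trip y (Ptrans x y V) (Real.cos (Real.arccos ⟪x, y⟫) • y - x) = trip y V (-x) :=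
  trip_ptrans_general x y V
end
end

section
/- Key Lemma: Let x, y be non-antipodal points of S^3 ⊂ R^4 with x ≠ y, let phi: (0,π) → R be smooth, set alpha = alpha(x,y) the spherical distance, and let V be tangent to S^3 at x. Then, with all differential operators taken on S^3 at y, ∇_y × (P_{yx}V × ∇_y phi(alpha)) - ∇_y (<V, ∇_x (phi(alpha) cos alpha)>) = (phi'' + 2 phi' cot(alpha) - phi)(V - <V,y> y). -/
open scoped RealInnerProductSpace

noncomputable section

/-- Spherical distance between points of `S³ ⊂ ℝ⁴`. -/
def sphDist (x z : E4) : ℝ := Real.arccos ⟪x, z⟫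

/-- The gradient with respect to `z` of the spherical distance `α(x,z)`:
`∇_z α = (z cos α - x)/sin α`. -/
def gradDist (x z : E4) : E4 :=
  (Real.sin (sphDist x z))⁻¹ • (Real.cos (sphDist x z) • z - x)


namespace KeyLemmaAux

open Finset Matrix in
theorem det_fin_four' (A : Matrix (Fin 4) (Fin 4) ℝ) : A.det =
    A 0 0 * (A 1 1 * (A 2 2 * A 3 3 - A 2 3 * A 3 2) - A 1 2 * (A 2 1 * A 3 3 - A 2 3 * A 3 1) + A 1 3 * (A 2 1 * A 3 2 - A 2 2 * A 3 1))
  - A 0 1 * (A 1 0 * (A 2 2 * A 3 3 - A 2 3 * A 3 2) - A 1 2 * (A 2 0 * A 3 3 - A 2 3 * A 3 0) + A 1 3 * (A 2 0 * A 3 2 - A 2 2 * A 3 0))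
  + A 0 2 * (A 1 0 * (A 2 1 * A 3 3 - A 2 3 * A 3 1) - A 1 1 * (A 2 0 * A 3 3 - A 2 3 * A 3 0) + A 1 3 * (A 2 0 * A 3 1 - A 2 1 * A 3 0))
  - A 0 3 * (A 1 0 * (A 2 1 * A 3 2 - A 2 2 * A 3 1) - A 1 1 * (A 2 0 * A 3 2 - A 2 2 * A 3 0) + A 1 2 * (A 2 0 * A 3 1 - A 2 1 * A 3 0)) := by
  rw [Matrix.det_succ_row_zero]
  simp only [Fin.sum_univ_four, Matrix.det_fin_three, Matrix.submatrix_apply, Fin.succ_zero_eq_one,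
    Fin.succ_one_eq_two, Fin.zero_succAbove, Fin.succ_succAbove_zero, Fin.succ_succAbove_one,
    Fin.val_zero, Fin.val_one, Fin.val_two,
    show (Fin.succ 2 : Fin 4) = 3 by decide, show ((1:Fin 4).succAbove 2) = 3 by decide,
    show ((2:Fin 4).succAbove 0) = 0 by decide, show ((2:Fin 4).succAbove 1) = 1 by decide,
    show ((2:Fin 4).succAbove 2) = 3 by decide, show ((3:Fin 4).succAbove 0) = 0 by decide,
    show ((3:Fin 4).succAbove 1) = 1 by decide, show ((3:Fin 4).succAbove 2) = 2 by decide,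
    show ((3:Fin 4):ℕ) = 3 by decide]
  norm_num
  ring

theorem det4_rows (a b c d : Fin 4 → ℝ) : Matrix.det (Matrix.of ![a, b, c, d]) =
    a 0 * (b 1 * (c 2 * d 3 - c 3 * d 2) - b 2 * (c 1 * d 3 - c 3 * d 1) + b 3 * (c 1 * d 2 - c 2 * d 1))
  - a 1 * (b 0 * (c 2 * d 3 - c 3 * d 2) - b 2 * (c 0 * d 3 - c 3 * d 0) + b 3 * (c 0 * d 2 - c 2 * d 0))
  + a 2 * (b 0 * (c 1 * d 3 - c 3 * d 1) - b 1 * (c 0 * d 3 - c 3 * d 0) + b 3 * (c 0 * d 1 - c 1 * d 0))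
  - a 3 * (b 0 * (c 1 * d 2 - c 2 * d 1) - b 1 * (c 0 * d 2 - c 2 * d 0) + b 2 * (c 0 * d 1 - c 1 * d 0)) := by
  rw [det_fin_four']; rfl

/-- The determinant of four vectors (as rows). -/
def Dt (A B C X : E4) : ℝ :=
  Matrix.det (Matrix.of ![(A : Fin 4 → ℝ), (B : Fin 4 → ℝ), (C : Fin 4 → ℝ), (X : Fin 4 → ℝ)])

lemma Dt_ex (A B C X : E4) : Dt A B C X =
    A 0 * (B 1 * (C 2 * X 3 - C 3 * X 2) - B 2 * (C 1 * X 3 - C 3 * X 1) + B 3 * (C 1 * X 2 - C 2 * X 1))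
  - A 1 * (B 0 * (C 2 * X 3 - C 3 * X 2) - B 2 * (C 0 * X 3 - C 3 * X 0) + B 3 * (C 0 * X 2 - C 2 * X 0))
  + A 2 * (B 0 * (C 1 * X 3 - C 3 * X 1) - B 1 * (C 0 * X 3 - C 3 * X 0) + B 3 * (C 0 * X 1 - C 1 * X 0))
  - A 3 * (B 0 * (C 1 * X 2 - C 2 * X 1) - B 1 * (C 0 * X 2 - C 2 * X 0) + B 2 * (C 0 * X 1 - C 1 * X 0)) :=
  det4_rows _ _ _ _

lemma inner_E4 (a b : E4) : ⟪a, b⟫ = a 0 * b 0 + a 1 * b 1 + a 2 * b 2 + a 3 * b 3 := by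
  simp [PiLp.inner_apply, RCLike.inner_apply, Fin.sum_univ_four]
  ring

lemma trip_ex (A B C : E4) (i : Fin 4) : trip A B C i =
    Dt A B C (WithLp.toLp 2 (Pi.single i 1 : Fin 4 → ℝ)) := rfl

lemma inner_trip (A B C X : E4) : ⟪trip A B C, X⟫ = Dt A B C X := by
  simp only [inner_E4, trip_ex, Dt_ex]
  norm_num [Pi.single_apply, Fin.ext_iff, show ((3:Fin 4):ℕ) = 3 from rfl,
    show ((2:Fin 4):ℕ) = 2 from rfl, show ((1:Fin 4):ℕ) = 1 from rfl,
    show ((0:Fin 4):ℕ) = 0 from rfl]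
  ring

lemma cramer5 (a b c d e w : E4) :
    Dt b c d e * ⟪a, w⟫ - Dt a c d e * ⟪b, w⟫ + Dt a b d e * ⟪c, w⟫
      - Dt a b c e * ⟪d, w⟫ + Dt a b c d * ⟪e, w⟫ = 0 := by
  simp only [Dt_ex, inner_E4]; ring

lemma Dt_swap34 (a b c d : E4) : Dt a b c d = -Dt a b d c := by
  simp only [Dt_ex]; ring

lemma Dt_swap14 (a b c d : E4) : Dt a b c d = -Dt d b c a := by
  simp only [Dt_ex]; ring

lemma Dt_cycle234 (a b c d : E4) : Dt a b c d = Dt a c d b := by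
  simp only [Dt_ex]; ring

lemma Dt_rep14 (a b c : E4) : Dt a b c a = 0 := by
  simp only [Dt_ex]; ring

lemma E4_apply_sub (a b : E4) (i : Fin 4) : (a - b) i = a i - b i := rfl
lemma E4_apply_add (a b : E4) (i : Fin 4) : (a + b) i = a i + b i := rfl
lemma E4_apply_smul (t : ℝ) (a : E4) (i : Fin 4) : (t • a) i = t * a i := rfl

lemma trip_simp (x V z : E4) (lam m cc : ℝ) :
    trip z (V - lam • (x + z)) (m • (cc • z - x)) = m • trip z x V := by
  ext i
  rw [E4_apply_smul, trip_ex, trip_ex, Dt_ex, Dt_ex]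
  simp only [E4_apply_sub, E4_apply_add, E4_apply_smul]
  ring

lemma trip2_proj (a b c : E4) (t : ℝ) : trip a (b - t • a) c = trip a b c := by
  ext i
  rw [trip_ex, trip_ex, Dt_ex, Dt_ex]
  simp only [E4_apply_sub, E4_apply_smul]
  ring

/-- `z ↦ trip z x V` as a continuous linear map. -/
def tripCLM (x V : E4) : E4 →L[ℝ] E4 :=
  LinearMap.toContinuousLinearMap
    { toFun := fun z => trip z x V
      map_add' := fun a b => by
        ext i
        show trip (a + b) x V i = trip a x V i + trip b x V i
        rw [trip_ex, trip_ex, trip_ex, Dt_ex, Dt_ex, Dt_ex]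
        simp only [E4_apply_add]
        ring
      map_smul' := fun t a => by
        ext i
        show trip (t • a) x V i = t * trip a x V i
        rw [trip_ex, trip_ex, Dt_ex, Dt_ex]
        simp only [E4_apply_smul]
        ring }

lemma tripCLM_apply (x V z : E4) : tripCLM x V z = trip z x V := rfl

lemma scalar_final (p1 p2 fa s sa u vy xB xC D1 D2 D3 D4 D5 : ℝ)
    (hu : sa * u = 1)
    (hsa2 : sa ^ 2 = 1 - s ^ 2)
    (hIV : D5 = -vy * D1 + s * D2)
    (hII : xB * D3 - xC * D4 = s * D5 - D2) :
    ((p1 * s - p2 * sa) * u ^ 3 * xB) * D3 + (p1 * u) * D5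
      - (((p1 * s - p2 * sa) * u ^ 3 * xC) * D4 + (p1 * u) * (-D5))
      - (-(((p1 * s - fa * sa) * u) * D2
            + vy * ((((2 * p1 * sa + fa * s - p2 * s) * sa + (p1 * s - fa * sa) * s) * u ^ 3) * D1)))
      - (p2 + 2 * p1 * s * u - fa) * (D2 - vy * 0) = 0 := by
  linear_combination ((p1 * s - p2 * sa) * u ^ 3) * hII
    + (2 * p1 * u + p1 * s ^ 2 * u ^ 3 - p2 * s * sa * u ^ 3) * hIV
    + (-(fa * D2) + 2 * p1 * sa * u ^ 2 * vy * D1 + p2 * u ^ 2 * D2 - p2 * s ^ 2 * u ^ 2 * D2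
        + 2 * p1 * u * vy * D1 - p1 * s * sa * u ^ 2 * D2 - p1 * s * u * D2 + p2 * sa * u * D2
        + p2 * D2) * hu
    + (p1 * s * u ^ 3 * D2 - p2 * u ^ 2 * D2) * hsa2

end KeyLemmaAux

open KeyLemmaAux

open Real in
/-- **Key Lemma.**  Let `x ≠ y` be non-antipodal points of `S³ ⊂ ℝ⁴`, let
`φ : (0,π) → ℝ` be smooth, set `α = α(x,y)`, and let `V` be tangent to `S³` at `x`.
Then, with all differential operators taken on `S³` at `y`,
`∇_y × (P_{yx}V × ∇_y φ(α)) - ∇_y ⟪V, ∇_x(φ(α) cos α)⟫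
  = (φ'' + 2 φ' cot α - φ)(V - ⟪V,y⟫ y)`.
Here the vector field `z ↦ P_{zx}V × ∇_z φ(α(x,z))` is expressed via the triple product
(which computes the cross product in `T_zS³`), its curl `c` at `y` is characterized by
`⟪c, B × C⟫ = ⟪∇_B F, C⟫ - ⟪∇_C F, B⟫` for tangent `B, C` at `y`, and the gradient `G`
at `y` of a scalar function is the tangent vector representing its differential. -/
theorem key_lemma (x y V : E4) (hx : ‖x‖ = 1) (hy : ‖y‖ = 1)
    (hne : x ≠ y) (hxy : ⟪x, y⟫ ≠ -1) (hV : ⟪V, x⟫ = 0)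
    (φ : ℝ → ℝ) (hφ : ContDiffOn ℝ (⊤ : ℕ∞) φ (Set.Ioo 0 π))
    (c : E4) (hc : ⟪c, y⟫ = 0)
    (hcurl : ∀ B C : E4, ⟪B, y⟫ = 0 → ⟪C, y⟫ = 0 →
      ⟪c, trip y B C⟫ =
        ⟪fderiv ℝ (fun z : E4 =>
            trip z (Ptrans x z V) (deriv φ (sphDist x z) • gradDist x z)) y B, C⟫ -
        ⟪fderiv ℝ (fun z : E4 =>
            trip z (Ptrans x z V) (deriv φ (sphDist x z) • gradDist x z)) y C, B⟫)
    (G : E4) (hG : ⟪G, y⟫ = 0)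
    (hgrad : ∀ W : E4, ⟪W, y⟫ = 0 →
      ⟪G, W⟫ = fderiv ℝ (fun z : E4 =>
          ⟪V, deriv (fun t => φ t * Real.cos t) (sphDist x z) • gradDist z x⟫) y W) :
    c - G =
      (deriv (deriv φ) (sphDist x y) +
          2 * deriv φ (sphDist x y) * (Real.cos (sphDist x y) / Real.sin (sphDist x y)) -
          φ (sphDist x y)) • (V - ⟪V, y⟫ • y) := by
  classical
  have hxx : ⟪x, x⟫ = (1:ℝ) := by
    rw [real_inner_self_eq_norm_mul_norm, hx]; norm_num
  have hyy : ⟪y, y⟫ = (1:ℝ) := by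
    rw [real_inner_self_eq_norm_mul_norm, hy]; norm_num
  have hs1 : ⟪x, y⟫ < 1 := (inner_lt_one_iff_real_of_norm_eq_one hx hy).mpr hne
  have habs : |⟪x, y⟫| ≤ 1 := by
    simpa [hx, hy] using abs_real_inner_le_norm x y
  have hsm1 : -1 < ⟪x, y⟫ := lt_of_le_of_ne (neg_le_of_abs_le habs) (Ne.symm hxy)
  have hcos : Real.cos (sphDist x y) = ⟪x, y⟫ :=
    Real.cos_arccos (le_of_lt hsm1) (le_of_lt hs1)
  have ha_mem : sphDist x y ∈ Set.Ioo 0 π := by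
    refine ⟨Real.arccos_pos.mpr hs1, lt_of_le_of_ne (Real.arccos_le_pi _) fun h => hxy ?_⟩
    rw [← hcos, show sphDist x y = π from h, Real.cos_pi]
  have hsapos : 0 < Real.sin (sphDist x y) :=
    Real.sin_pos_of_pos_of_lt_pi ha_mem.1 ha_mem.2
  have hsane : Real.sin (sphDist x y) ≠ 0 := ne_of_gt hsapos
  have hsaeq : Real.sqrt (1 - ⟪x, y⟫ ^ 2) = Real.sin (sphDist x y) :=
    (Real.sin_arccos _).symm
  have hsq1 : (0:ℝ) < 1 - ⟪x, y⟫ ^ 2 := by nlinarith [abs_le.mp habs]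
  have hsa2 : Real.sin (sphDist x y) ^ 2 = 1 - ⟪x, y⟫ ^ 2 := by
    rw [← hsaeq]
    exact Real.sq_sqrt (le_of_lt hsq1)
  -- differentiability of φ
  have hφdiff : ∀ t ∈ Set.Ioo 0 π, DifferentiableAt ℝ φ t := fun t ht =>
    ((hφ.differentiableOn (by simp)).differentiableAt (isOpen_Ioo.mem_nhds ht))
  have hdφ : ContDiffOn ℝ (⊤ : ℕ∞) (deriv φ) (Set.Ioo 0 π) := hφ.deriv_of_isOpen isOpen_Ioo (by simp)
  have hp1 : HasDerivAt φ (deriv φ (sphDist x y)) (sphDist x y) :=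
    (hφdiff _ ha_mem).hasDerivAt
  have hp2 : HasDerivAt (deriv φ) (deriv (deriv φ) (sphDist x y)) (sphDist x y) :=
    ((hdφ.differentiableOn (by simp)).differentiableAt (isOpen_Ioo.mem_nhds ha_mem)).hasDerivAt
  have harc_eq : Real.arccos ⟪x, y⟫ = sphDist x y := rfl
  have harccos : HasDerivAt Real.arccos (-((Real.sin (sphDist x y))⁻¹)) ⟪x, y⟫ := by
    have h := Real.hasDerivAt_arccos hxy (ne_of_lt hs1)
    rwa [hsaeq, one_div] at h
  have hinv : HasDerivAt (fun t : ℝ => (Real.sqrt (1 - t ^ 2))⁻¹)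
      (⟪x, y⟫ * ((Real.sin (sphDist x y))⁻¹) ^ 3) ⟪x, y⟫ := by
    have hin : HasDerivAt (fun t : ℝ => 1 - t ^ 2) (-(2 * ⟪x, y⟫)) ⟪x, y⟫ := by
      simpa using ((hasDerivAt_pow 2 (⟪x, y⟫ : ℝ)).const_sub 1)
    have hsq : HasDerivAt (fun t : ℝ => Real.sqrt (1 - t ^ 2))
        (1 / (2 * Real.sqrt (1 - ⟪x, y⟫ ^ 2)) * -(2 * ⟪x, y⟫)) ⟪x, y⟫ := by
      have h2 : HasDerivAt Real.sqrt (1 / (2 * Real.sqrt (1 - ⟪x, y⟫ ^ 2))) (1 - ⟪x, y⟫ ^ 2) :=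
        Real.hasDerivAt_sqrt (ne_of_gt hsq1)
      exact h2.comp ⟪x, y⟫ hin
    have h := hsq.inv (by rw [hsaeq]; exact hsane)
    refine h.congr_deriv (Eq.symm ?_)
    rw [hsaeq]
    field_simp
  -- curl side derivative
  have hRder : HasDerivAt (fun t : ℝ => deriv φ (Real.arccos t) * (Real.sqrt (1 - t ^ 2))⁻¹)
      ((deriv φ (sphDist x y) * ⟪x, y⟫ - deriv (deriv φ) (sphDist x y) * Real.sin (sphDist x y))
        * ((Real.sin (sphDist x y))⁻¹) ^ 3) ⟪x, y⟫ := by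
    have hφ'c : HasDerivAt (fun t : ℝ => deriv φ (Real.arccos t))
        (deriv (deriv φ) (sphDist x y) * -((Real.sin (sphDist x y))⁻¹)) ⟪x, y⟫ := by
      have h0 : HasDerivAt (deriv φ) (deriv (deriv φ) (sphDist x y)) (Real.arccos ⟪x, y⟫) := by
        rw [harc_eq]; exact hp2
      exact h0.comp ⟪x, y⟫ harccos
    have h := hφ'c.mul hinv
    refine h.congr_deriv (Eq.symm ?_)
    rw [harc_eq, hsaeq]
    field_simp
    ring
  have hFeq : (fun z : E4 => trip z (Ptrans x z V) (deriv φ (sphDist x z) • gradDist x z))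
      = (fun z : E4 => (deriv φ (Real.arccos ⟪x, z⟫) * (Real.sqrt (1 - ⟪x, z⟫ ^ 2))⁻¹) • tripCLM x V z) := by
    funext z
    show trip z (V - (⟪V, z⟫ / (1 + ⟪x, z⟫)) • (x + z))
        (deriv φ (sphDist x z) • ((Real.sin (sphDist x z))⁻¹ • (Real.cos (sphDist x z) • z - x))) = _
    rw [smul_smul, trip_simp, tripCLM_apply]
    rw [show sphDist x z = Real.arccos ⟪x, z⟫ from rfl, Real.sin_arccos]
  have hFder : HasFDerivAt
      (fun z : E4 => (deriv φ (Real.arccos ⟪x, z⟫) * (Real.sqrt (1 - ⟪x, z⟫ ^ 2))⁻¹) • tripCLM x V z)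
      ((deriv φ (Real.arccos ⟪x, y⟫) * (Real.sqrt (1 - ⟪x, y⟫ ^ 2))⁻¹) • (tripCLM x V)
        + (((deriv φ (sphDist x y) * ⟪x, y⟫ - deriv (deriv φ) (sphDist x y) * Real.sin (sphDist x y))
            * ((Real.sin (sphDist x y))⁻¹) ^ 3) • (innerSL ℝ x : E4 →L[ℝ] ℝ)).smulRight (tripCLM x V y)) y := by
    have hc1 : HasFDerivAt (fun z : E4 => deriv φ (Real.arccos ⟪x, z⟫) * (Real.sqrt (1 - ⟪x, z⟫ ^ 2))⁻¹)
        (((deriv φ (sphDist x y) * ⟪x, y⟫ - deriv (deriv φ) (sphDist x y) * Real.sin (sphDist x y))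
            * ((Real.sin (sphDist x y))⁻¹) ^ 3) • (innerSL ℝ x : E4 →L[ℝ] ℝ)) y := by
      have h0 : HasDerivAt (fun t : ℝ => deriv φ (Real.arccos t) * (Real.sqrt (1 - t ^ 2))⁻¹)
          ((deriv φ (sphDist x y) * ⟪x, y⟫ - deriv (deriv φ) (sphDist x y) * Real.sin (sphDist x y))
            * ((Real.sin (sphDist x y))⁻¹) ^ 3) ((innerSL ℝ x : E4 →L[ℝ] ℝ) y) := by
        rw [innerSL_apply_apply]; exact hRder
      exact h0.comp_hasFDerivAt y (innerSL ℝ x : E4 →L[ℝ] ℝ).hasFDerivAt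
    exact hc1.smul (tripCLM x V).hasFDerivAt
  have hDF : ∀ B : E4,
      fderiv ℝ (fun z : E4 => trip z (Ptrans x z V) (deriv φ (sphDist x z) • gradDist x z)) y B
        = ((deriv φ (sphDist x y) * ⟪x, y⟫ - deriv (deriv φ) (sphDist x y) * Real.sin (sphDist x y))
            * ((Real.sin (sphDist x y))⁻¹) ^ 3 * ⟪x, B⟫) • trip y x V
          + (deriv φ (sphDist x y) * (Real.sin (sphDist x y))⁻¹) • trip B x V := by
    intro B
    rw [hFeq, hFder.fderiv]
    simp only [ContinuousLinearMap.add_apply, ContinuousLinearMap.coe_smul', Pi.smul_apply,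
      ContinuousLinearMap.smulRight_apply, innerSL_apply_apply, tripCLM_apply, smul_eq_mul]
    rw [harc_eq, hsaeq]
    rw [add_comm]
  -- gradient side
  have hψloc : ∀ t ∈ Set.Ioo 0 π, deriv (fun u => φ u * Real.cos u) t
      = deriv φ t * Real.cos t + φ t * -Real.sin t := fun t ht =>
    ((hφdiff t ht).hasDerivAt.mul (Real.hasDerivAt_cos t)).deriv
  have hψev : deriv (fun u => φ u * Real.cos u) =ᶠ[nhds (sphDist x y)]
      fun t => deriv φ t * Real.cos t + φ t * -Real.sin t :=
    Filter.eventuallyEq_of_mem (isOpen_Ioo.mem_nhds ha_mem) hψloc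
  have hψder : HasDerivAt (deriv (fun u => φ u * Real.cos u))
      ((deriv (deriv φ) (sphDist x y) * Real.cos (sphDist x y)
          + deriv φ (sphDist x y) * -Real.sin (sphDist x y))
        + (deriv φ (sphDist x y) * -Real.sin (sphDist x y)
          + φ (sphDist x y) * -Real.cos (sphDist x y))) (sphDist x y) := by
    have h : HasDerivAt (fun t => deriv φ t * Real.cos t + φ t * -Real.sin t)
        ((deriv (deriv φ) (sphDist x y) * Real.cos (sphDist x y)
            + deriv φ (sphDist x y) * -Real.sin (sphDist x y))
          + (deriv φ (sphDist x y) * -Real.sin (sphDist x y)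
            + φ (sphDist x y) * -Real.cos (sphDist x y))) (sphDist x y) :=
      (hp2.mul (Real.hasDerivAt_cos _)).add (hp1.mul ((Real.hasDerivAt_sin _).neg))
    exact h.congr_of_eventuallyEq hψev
  have hQder : HasDerivAt
      (fun t : ℝ => deriv (fun u => φ u * Real.cos u) (Real.arccos t) * (Real.sqrt (1 - t ^ 2))⁻¹)
      (((2 * deriv φ (sphDist x y) * Real.sin (sphDist x y) + φ (sphDist x y) * ⟪x, y⟫
          - deriv (deriv φ) (sphDist x y) * ⟪x, y⟫) * Real.sin (sphDist x y)
        + (deriv φ (sphDist x y) * ⟪x, y⟫ - φ (sphDist x y) * Real.sin (sphDist x y)) * ⟪x, y⟫)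
        * ((Real.sin (sphDist x y))⁻¹) ^ 3) ⟪x, y⟫ := by
    have hψc : HasDerivAt (fun t : ℝ => deriv (fun u => φ u * Real.cos u) (Real.arccos t))
        (((deriv (deriv φ) (sphDist x y) * Real.cos (sphDist x y)
            + deriv φ (sphDist x y) * -Real.sin (sphDist x y))
          + (deriv φ (sphDist x y) * -Real.sin (sphDist x y)
            + φ (sphDist x y) * -Real.cos (sphDist x y))) * -((Real.sin (sphDist x y))⁻¹)) ⟪x, y⟫ := by
      have h0 : HasDerivAt (deriv (fun u => φ u * Real.cos u))
          ((deriv (deriv φ) (sphDist x y) * Real.cos (sphDist x y)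
              + deriv φ (sphDist x y) * -Real.sin (sphDist x y))
            + (deriv φ (sphDist x y) * -Real.sin (sphDist x y)
              + φ (sphDist x y) * -Real.cos (sphDist x y))) (Real.arccos ⟪x, y⟫) := by
        rw [harc_eq]; exact hψder
      exact h0.comp ⟪x, y⟫ harccos
    have h := hψc.mul hinv
    refine h.congr_deriv (Eq.symm ?_)
    rw [harc_eq, hsaeq, hψloc _ ha_mem, hcos]
    field_simp
    ring
  have hgeq : (fun z : E4 => ⟪V, deriv (fun t => φ t * Real.cos t) (sphDist x z) • gradDist z x⟫)
      = fun z : E4 => -(deriv (fun u => φ u * Real.cos u) (Real.arccos ⟪x, z⟫)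
          * (Real.sqrt (1 - ⟪x, z⟫ ^ 2))⁻¹ * ⟪V, z⟫) := by
    funext z
    rw [real_inner_smul_right]
    show deriv (fun t => φ t * Real.cos t) (sphDist x z)
        * ⟪V, (Real.sin (sphDist z x))⁻¹ • (Real.cos (sphDist z x) • x - z)⟫ = _
    rw [real_inner_smul_right, inner_sub_right, real_inner_smul_right, hV,
      show sphDist z x = Real.arccos ⟪x, z⟫ by
        rw [show sphDist z x = Real.arccos ⟪z, x⟫ from rfl, real_inner_comm],
      show sphDist x z = Real.arccos ⟪x, z⟫ from rfl, Real.sin_arccos]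
    ring
  have hGder : HasFDerivAt
      (fun z : E4 => -(deriv (fun u => φ u * Real.cos u) (Real.arccos ⟪x, z⟫)
          * (Real.sqrt (1 - ⟪x, z⟫ ^ 2))⁻¹ * ⟪V, z⟫))
      (-((deriv (fun u => φ u * Real.cos u) (Real.arccos ⟪x, y⟫)
            * (Real.sqrt (1 - ⟪x, y⟫ ^ 2))⁻¹) • (innerSL ℝ V : E4 →L[ℝ] ℝ)
        + ⟪V, y⟫ • ((((2 * deriv φ (sphDist x y) * Real.sin (sphDist x y) + φ (sphDist x y) * ⟪x, y⟫
              - deriv (deriv φ) (sphDist x y) * ⟪x, y⟫) * Real.sin (sphDist x y)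
            + (deriv φ (sphDist x y) * ⟪x, y⟫ - φ (sphDist x y) * Real.sin (sphDist x y)) * ⟪x, y⟫)
            * ((Real.sin (sphDist x y))⁻¹) ^ 3) • (innerSL ℝ x : E4 →L[ℝ] ℝ)))) y := by
    have hq1 : HasFDerivAt
        (fun z : E4 => deriv (fun u => φ u * Real.cos u) (Real.arccos ⟪x, z⟫)
          * (Real.sqrt (1 - ⟪x, z⟫ ^ 2))⁻¹)
        ((((2 * deriv φ (sphDist x y) * Real.sin (sphDist x y) + φ (sphDist x y) * ⟪x, y⟫
              - deriv (deriv φ) (sphDist x y) * ⟪x, y⟫) * Real.sin (sphDist x y)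
            + (deriv φ (sphDist x y) * ⟪x, y⟫ - φ (sphDist x y) * Real.sin (sphDist x y)) * ⟪x, y⟫)
            * ((Real.sin (sphDist x y))⁻¹) ^ 3) • (innerSL ℝ x : E4 →L[ℝ] ℝ)) y := by
      have h0 : HasDerivAt
          (fun t : ℝ => deriv (fun u => φ u * Real.cos u) (Real.arccos t) * (Real.sqrt (1 - t ^ 2))⁻¹)
          (((2 * deriv φ (sphDist x y) * Real.sin (sphDist x y) + φ (sphDist x y) * ⟪x, y⟫
              - deriv (deriv φ) (sphDist x y) * ⟪x, y⟫) * Real.sin (sphDist x y)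
            + (deriv φ (sphDist x y) * ⟪x, y⟫ - φ (sphDist x y) * Real.sin (sphDist x y)) * ⟪x, y⟫)
            * ((Real.sin (sphDist x y))⁻¹) ^ 3) ((innerSL ℝ x : E4 →L[ℝ] ℝ) y) := by
        rw [innerSL_apply_apply]; exact hQder
      exact h0.comp_hasFDerivAt y (innerSL ℝ x : E4 →L[ℝ] ℝ).hasFDerivAt
    exact (hq1.mul (innerSL ℝ V : E4 →L[ℝ] ℝ).hasFDerivAt).neg
  have hGW : ∀ W : E4, ⟪W, y⟫ = 0 → ⟪G, W⟫ =
      -(((deriv φ (sphDist x y) * ⟪x, y⟫ - φ (sphDist x y) * Real.sin (sphDist x y))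
          * (Real.sin (sphDist x y))⁻¹) * ⟪V, W⟫
        + ⟪V, y⟫ * ((((2 * deriv φ (sphDist x y) * Real.sin (sphDist x y) + φ (sphDist x y) * ⟪x, y⟫
              - deriv (deriv φ) (sphDist x y) * ⟪x, y⟫) * Real.sin (sphDist x y)
            + (deriv φ (sphDist x y) * ⟪x, y⟫ - φ (sphDist x y) * Real.sin (sphDist x y)) * ⟪x, y⟫)
            * ((Real.sin (sphDist x y))⁻¹) ^ 3) * ⟪x, W⟫)) := by
    intro W hW
    rw [hgrad W hW, hgeq, hGder.fderiv]
    simp only [ContinuousLinearMap.neg_apply, ContinuousLinearMap.add_apply,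
      ContinuousLinearMap.coe_smul', Pi.smul_apply, innerSL_apply_apply, smul_eq_mul]
    rw [harc_eq, hψloc _ ha_mem, hcos, hsaeq]
    ring
  -- assemble
  rw [hcos]
  set w := c - G - (deriv (deriv φ) (sphDist x y)
      + 2 * deriv φ (sphDist x y) * (⟪x, y⟫ / Real.sin (sphDist x y))
      - φ (sphDist x y)) • (V - ⟪V, y⟫ • y) with hw
  have hwy : ⟪w, y⟫ = 0 := by
    rw [hw, inner_sub_left, inner_sub_left, real_inner_smul_left, inner_sub_left,
      real_inner_smul_left, hc, hG, hyy]
    ring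
  have hkey : ∀ B C : E4, ⟪B, y⟫ = 0 → ⟪C, y⟫ = 0 → ⟪w, trip y B C⟫ = 0 := by
    intro B C hB hC
    have hTy : ⟪trip y B C, y⟫ = 0 := by rw [inner_trip]; exact Dt_rep14 y B C
    have hcT := hcurl B C hB hC
    rw [hDF B, hDF C] at hcT
    have hGT := hGW (trip y B C) hTy
    have hu : Real.sin (sphDist x y) * (Real.sin (sphDist x y))⁻¹ = 1 := mul_inv_cancel₀ hsane
    have hIV : Dt B x V C = -⟪V, y⟫ * Dt y B C x + ⟪x, y⟫ * Dt y B C V := by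
      linear_combination (cramer5 y B x V C y) - Dt B x V C * hyy + Dt y x V C * hB
        - Dt y B x V * hC + ⟪V, y⟫ * (Dt_swap34 y B x C) - ⟪x, y⟫ * (Dt_swap34 y B V C)
    have hII : ⟪x, B⟫ * Dt y x V C - ⟪x, C⟫ * Dt y x V B
        = ⟪x, y⟫ * Dt B x V C - Dt y B C V := by
      linear_combination (-1 : ℝ) * (cramer5 y B x V C x) + Dt y x V C * (real_inner_comm B x)
        + ⟪x, C⟫ * (Dt_cycle234 y B x V) - Dt y B x V * (real_inner_comm C x)
        - Dt B x V C * (real_inner_comm y x) + (Dt_swap34 y B V C) + Dt y B V C * hxx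
        - Dt y B x C * hV
    rw [hw, inner_sub_left, inner_sub_left, real_inner_smul_left, hcT, hGT,
      inner_add_left, inner_add_left, real_inner_smul_left, real_inner_smul_left,
      real_inner_smul_left, real_inner_smul_left, inner_trip, inner_trip, inner_trip, inner_trip,
      inner_sub_left, real_inner_smul_left,
      real_inner_comm (trip y B C) V, real_inner_comm (trip y B C) x,
      real_inner_comm (trip y B C) y, hTy,
      inner_trip, inner_trip, Dt_swap14 C x V B]
    linear_combination
      ((deriv φ (sphDist x y) * ⟪x, y⟫ - deriv (deriv φ) (sphDist x y) * Real.sin (sphDist x y))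
        * ((Real.sin (sphDist x y))⁻¹) ^ 3) * hII
      + (2 * deriv φ (sphDist x y) * (Real.sin (sphDist x y))⁻¹
          + deriv φ (sphDist x y) * ⟪x, y⟫ ^ 2 * ((Real.sin (sphDist x y))⁻¹) ^ 3
          - deriv (deriv φ) (sphDist x y) * ⟪x, y⟫ * Real.sin (sphDist x y)
            * ((Real.sin (sphDist x y))⁻¹) ^ 3) * hIV
      + (-(φ (sphDist x y) * Dt y B C V)
          + 2 * deriv φ (sphDist x y) * Real.sin (sphDist x y) * ((Real.sin (sphDist x y))⁻¹) ^ 2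
            * ⟪V, y⟫ * Dt y B C x
          + deriv (deriv φ) (sphDist x y) * ((Real.sin (sphDist x y))⁻¹) ^ 2 * Dt y B C V
          - deriv (deriv φ) (sphDist x y) * ⟪x, y⟫ ^ 2 * ((Real.sin (sphDist x y))⁻¹) ^ 2
            * Dt y B C V
          + 2 * deriv φ (sphDist x y) * (Real.sin (sphDist x y))⁻¹ * ⟪V, y⟫ * Dt y B C x
          - deriv φ (sphDist x y) * ⟪x, y⟫ * Real.sin (sphDist x y)
            * ((Real.sin (sphDist x y))⁻¹) ^ 2 * Dt y B C V
          - deriv φ (sphDist x y) * ⟪x, y⟫ * (Real.sin (sphDist x y))⁻¹ * Dt y B C V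
          + deriv (deriv φ) (sphDist x y) * Real.sin (sphDist x y) * (Real.sin (sphDist x y))⁻¹
            * Dt y B C V
          + deriv (deriv φ) (sphDist x y) * Dt y B C V) * hu
      + (deriv φ (sphDist x y) * ⟪x, y⟫ * ((Real.sin (sphDist x y))⁻¹) ^ 3 * Dt y B C V
          - deriv (deriv φ) (sphDist x y) * ((Real.sin (sphDist x y))⁻¹) ^ 2 * Dt y B C V) * hsa2
  -- kill w
  have htrip0 : ∀ B : E4, ⟪B, y⟫ = 0 → trip y B w = 0 := by
    intro B hB
    have hCy : ⟪trip y B w, y⟫ = 0 := by rw [inner_trip]; exact Dt_rep14 y B w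
    have h := hkey B (trip y B w) hB hCy
    have h2 : ⟪trip y B w, trip y B w⟫ = (0 : ℝ) := by
      rw [inner_trip]
      rw [real_inner_comm, inner_trip, Dt_swap34] at h
      linarith
    exact inner_self_eq_zero.mp h2
  have htrip1 : ∀ B : E4, trip y B w = 0 := by
    intro B
    have hB' : ⟪B - ⟪B, y⟫ • y, y⟫ = 0 := by
      rw [inner_sub_left, real_inner_smul_left, hyy]; ring
    have h := htrip0 _ hB'
    rwa [trip2_proj] at h
  have hm : ∀ k j : Fin 4, Dt y (WithLp.toLp 2 (Pi.single k 1 : Fin 4 → ℝ)) w (WithLp.toLp 2 (Pi.single j 1 : Fin 4 → ℝ)) = 0 := by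
    intro k j
    have h : trip y (WithLp.toLp 2 (Pi.single k 1 : Fin 4 → ℝ)) w j = (0 : E4) j := by
      rw [htrip1]
    rwa [trip_ex, show (0 : E4) j = 0 from rfl] at h
  have hw0 : w = 0 := by
    have hyy' := hyy; rw [inner_E4] at hyy'
    have hwy' := hwy; rw [inner_E4] at hwy'
    ext l
    show w l = 0
    have e23 := hm 2 3; have e31 := hm 3 1; have e12 := hm 1 2
    have e32 := hm 3 2; have e03 := hm 0 3; have e20 := hm 2 0
    have e13 := hm 1 3; have e30 := hm 3 0; have e01 := hm 0 1
    have e21 := hm 2 1; have e02 := hm 0 2; have e10 := hm 1 0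
    rw [Dt_ex] at e23 e31 e12 e32 e03 e20 e13 e30 e01 e21 e02 e10
    norm_num [Pi.single_apply, Fin.ext_iff, show ((3:Fin 4):ℕ) = 3 from rfl,
      show ((2:Fin 4):ℕ) = 2 from rfl, show ((1:Fin 4):ℕ) = 1 from rfl,
      show ((0:Fin 4):ℕ) = 0 from rfl] at e23 e31 e12 e32 e03 e20 e13 e30 e01 e21 e02 e10
    fin_cases l
    · show w 0 = 0
      linear_combination y 1 * e23 + y 2 * e31 + y 3 * e12 + y 0 * hwy' - w 0 * hyy'
    · show w 1 = 0
      linear_combination y 0 * e32 + y 2 * e03 + y 3 * e20 + y 1 * hwy' - w 1 * hyy'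
    · show w 2 = 0
      linear_combination y 0 * e13 + y 1 * e30 + y 3 * e01 + y 2 * hwy' - w 2 * hyy'
    · show w 3 = 0
      linear_combination y 0 * e21 + y 1 * e02 + y 2 * e10 + y 3 * hwy' - w 3 * hyy'
  rw [hw] at hw0
  exact sub_eq_zero.mp hw0
end
end

section
/- Let U be a left-invariant vector field on the group S^3 of unit quaternions. Then for any smooth vector field W and any gradient field G = ∇f on S^3: the covariant derivative satisfies ∇_W U = W × U, and ∇(<U, G>) = [U, G] (the Lie bracket of vector fields). -/
open scoped RealInnerProductSpace Quaternion

noncomputable section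

/-- Coordinates of a quaternion in the standard basis `(1, i, j, k)` of `ℍ ≅ ℝ⁴`. -/
def qCoords (a : ℍ[ℝ]) : Fin 4 → ℝ := ![a.re, a.imI, a.imJ, a.imK]

/-- The triple product `[A,B,C]` in `ℍ ≅ ℝ⁴`: the unique quaternion satisfying
`⟪[A,B,C], X⟫ = det(A,B,C,X)` in the standard coordinates.  For `A = q ∈ S³` and `B, C`
tangent at `q`, this computes the cross product `B × C` in the oriented 3-space `T_qS³`. -/
def tripQ (A B C : ℍ[ℝ]) : ℍ[ℝ] :=
  ⟨Matrix.det (Matrix.of ![qCoords A, qCoords B, qCoords C, Pi.single 0 1]),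
   Matrix.det (Matrix.of ![qCoords A, qCoords B, qCoords C, Pi.single 1 1]),
   Matrix.det (Matrix.of ![qCoords A, qCoords B, qCoords C, Pi.single 2 1]),
   Matrix.det (Matrix.of ![qCoords A, qCoords B, qCoords C, Pi.single 3 1])⟩

private lemma fs23 : Fin.succ (2 : Fin 3) = (3 : Fin 4) := rfl
private lemma fcs2 : Fin.castSucc (2 : Fin 3) = (2 : Fin 4) := rfl
theorem det4 (r0 r1 r2 r3 : Fin 4 → ℝ) :
    Matrix.det (Matrix.of ![r0, r1, r2, r3]) =
      r0 0 * (r1 1 * (r2 2 * r3 3 - r2 3 * r3 2) - r1 2 * (r2 1 * r3 3 - r2 3 * r3 1)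
          + r1 3 * (r2 1 * r3 2 - r2 2 * r3 1))
      - r0 1 * (r1 0 * (r2 2 * r3 3 - r2 3 * r3 2) - r1 2 * (r2 0 * r3 3 - r2 3 * r3 0)
          + r1 3 * (r2 0 * r3 2 - r2 2 * r3 0))
      + r0 2 * (r1 0 * (r2 1 * r3 3 - r2 3 * r3 1) - r1 1 * (r2 0 * r3 3 - r2 3 * r3 0)
          + r1 3 * (r2 0 * r3 1 - r2 1 * r3 0))
      - r0 3 * (r1 0 * (r2 1 * r3 2 - r2 2 * r3 1) - r1 1 * (r2 0 * r3 2 - r2 2 * r3 0)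
          + r1 2 * (r2 0 * r3 1 - r2 1 * r3 0)) := by
  simp [Matrix.det_succ_row_zero, Fin.sum_univ_succ, Fin.succAbove, Matrix.submatrix]
  ring

set_option maxHeartbeats 1000000 in
theorem key1 (q w u : ℍ[ℝ]) (hu : u.re = 0) (hq : ‖q‖ = 1) (hw : ⟪w, q⟫ = 0) :
    w * u - ⟪w * u, q⟫ • q = tripQ q w (q * u) := by
  have hq2 : q.re^2 + q.imI^2 + q.imJ^2 + q.imK^2 = 1 := by
    have := Quaternion.normSq_eq_norm_mul_self q
    rw [hq] at this
    simpa [Quaternion.normSq_def', sq, eq_comm] using this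
  have hw2 : w.re*q.re + w.imI*q.imI + w.imJ*q.imJ + w.imK*q.imK = 0 := by
    simpa [Quaternion.inner_def, Quaternion.re_mul] using hw
  have h0 : (Pi.single (0:Fin 4) (1:ℝ)) = ![1,0,0,0] := by ext i; fin_cases i <;> simp
  have h1 : (Pi.single (1:Fin 4) (1:ℝ)) = ![0,1,0,0] := by ext i; fin_cases i <;> simp
  have h2 : (Pi.single (2:Fin 4) (1:ℝ)) = ![0,0,1,0] := by ext i; fin_cases i <;> simp
  have h3 : (Pi.single (3:Fin 4) (1:ℝ)) = ![0,0,0,1] := by ext i; fin_cases i <;> simp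
  ext <;>
  · simp only [tripQ, qCoords, h0, h1, h2, h3, det4, Quaternion.inner_def,
      Quaternion.re_sub, Quaternion.imI_sub, Quaternion.imJ_sub, Quaternion.imK_sub,
      Quaternion.re_smul, Quaternion.imI_smul, Quaternion.imJ_smul, Quaternion.imK_smul,
      Quaternion.re_mul, Quaternion.imI_mul, Quaternion.imJ_mul, Quaternion.imK_mul,
      Quaternion.re_star, Quaternion.imI_star, Quaternion.imJ_star, Quaternion.imK_star,
      smul_eq_mul, Matrix.cons_val_zero, Matrix.cons_val_one, Matrix.head_cons,
      Matrix.cons_val_two, Matrix.cons_val_three, Matrix.tail_cons]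
    norm_num
    first
    | linear_combination
        (-(w.re*u.re - w.imI*u.imI - w.imJ*u.imJ - w.imK*u.imK)) * hq2
        + (q.re*u.re - q.imI*u.imI - q.imJ*u.imJ - q.imK*u.imK) * hw2
        + (q.imK^2*w.re + q.imJ^2*w.re + q.imI^2*w.re - 2*q.re*q.imK*w.imK
           - 2*q.re*q.imJ*w.imJ - 2*q.re*q.imI*w.imI - q.re^2*w.re) * hu
    | linear_combination
        (-(w.re*u.imI + w.imI*u.re + w.imJ*u.imK - w.imK*u.imJ)) * hq2
        + (q.re*u.imI + q.imI*u.re + q.imJ*u.imK - q.imK*u.imJ) * hw2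
        + (q.imK^2*w.imI + q.imJ^2*w.imI - 2*q.imI*q.imK*w.imK - 2*q.imI*q.imJ*w.imJ
           - q.imI^2*w.imI - 2*q.re*q.imI*w.re + q.re^2*w.imI) * hu
    | linear_combination
        (-(w.re*u.imJ - w.imI*u.imK + w.imJ*u.re + w.imK*u.imI)) * hq2
        + (q.re*u.imJ - q.imI*u.imK + q.imJ*u.re + q.imK*u.imI) * hw2
        + (q.imK^2*w.imJ - 2*q.imJ*q.imK*w.imK - q.imJ^2*w.imJ - 2*q.imI*q.imJ*w.imI
           + q.imI^2*w.imJ - 2*q.re*q.imJ*w.re + q.re^2*w.imJ) * hu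
    | linear_combination
        (-(w.re*u.imK + w.imI*u.imJ - w.imJ*u.imI + w.imK*u.re)) * hq2
        + (q.re*u.imK + q.imI*u.imJ - q.imJ*u.imI + q.imK*u.re) * hw2
        + (-q.imK^2*w.imK - 2*q.imJ*q.imK*w.imJ + q.imJ^2*w.imK - 2*q.imI*q.imK*w.imI
           + q.imI^2*w.imK - 2*q.re*q.imK*w.re + q.re^2*w.imK) * hu

/-- If two functions agree on the unit sphere, their fderivs agree in tangent directions. -/
theorem tangent_fderiv_eq {G H : ℍ[ℝ] → ℍ[ℝ]} {q : ℍ[ℝ]} (hq : ‖q‖ = 1)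
    (hG : DifferentiableAt ℝ G q) (hH : DifferentiableAt ℝ H q)
    (heq : ∀ p : ℍ[ℝ], ‖p‖ = 1 → G p = H p) (v : ℍ[ℝ]) (hv : ⟪v, q⟫ = 0) :
    fderiv ℝ G q v = fderiv ℝ H q v := by
  set B : ℝ := ‖v‖ ^ 2 with hB
  set c : ℝ → ℍ[ℝ] := fun t => (Real.sqrt (1 + t ^ 2 * B))⁻¹ • (q + t • v) with hc
  have hpos : ∀ t : ℝ, (0:ℝ) < 1 + t ^ 2 * B := by
    intro t
    have : 0 ≤ t ^ 2 * B := mul_nonneg (sq_nonneg t) (by positivity)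
    linarith
  have hc0 : c 0 = q := by simp [hc]
  have hnorm : ∀ t, ‖q + t • v‖ = Real.sqrt (1 + t ^ 2 * B) := by
    intro t
    have h1 : ‖q + t • v‖ ^ 2 = 1 + t ^ 2 * B := by
      rw [norm_add_sq_real, hq, real_inner_smul_right, real_inner_comm, hv, norm_smul]
      simp [hB, mul_pow]
    rw [← h1, Real.sqrt_sq (norm_nonneg _)]
  have hc1 : ∀ t, ‖c t‖ = 1 := by
    intro t
    rw [hc]
    simp only [norm_smul, hnorm t, norm_inv, Real.norm_eq_abs,
      abs_of_pos (Real.sqrt_pos.mpr (hpos t))]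
    rw [inv_mul_cancel₀ (ne_of_gt (Real.sqrt_pos.mpr (hpos t)))]
  -- derivative of c at 0 is v
  have hcd : HasDerivAt c v 0 := by
    have hpoly : HasDerivAt (fun t : ℝ => 1 + t ^ 2 * B) 0 0 := by
      have := ((hasDerivAt_pow 2 (0:ℝ)).mul_const B).const_add 1
      simpa using this
    have hsqrt : HasDerivAt (fun t : ℝ => Real.sqrt (1 + t ^ 2 * B)) 0 0 := by
      have := (Real.hasDerivAt_sqrt (x := 1 + (0:ℝ) ^ 2 * B) (by norm_num)).comp 0 hpoly
      simpa [Function.comp_def] using this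
    have hinv : HasDerivAt (fun t : ℝ => (Real.sqrt (1 + t ^ 2 * B))⁻¹) 0 0 := by
      have := hsqrt.fun_inv (by norm_num)
      simpa using this
    have hvec : HasDerivAt (fun t : ℝ => q + t • v) v 0 := by
      simpa using ((hasDerivAt_id (0:ℝ)).smul_const v).const_add q
    have := hinv.fun_smul hvec
    simp only [hc]
    exact this.congr_deriv (by norm_num)
  have key : ∀ (K : ℍ[ℝ] → ℍ[ℝ]), DifferentiableAt ℝ K q →
      HasDerivAt (fun t => K (c t)) (fderiv ℝ K q v) 0 := by
    intro K hK
    have hK' : HasFDerivAt K (fderiv ℝ K q) (c 0) := by rw [hc0]; exact hK.hasFDerivAt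
    exact hK'.comp_hasDerivAt 0 hcd
  have hGH : (fun t => G (c t)) = fun t => H (c t) := by
    funext t; exact heq _ (hc1 t)
  have h1 := key G hG
  have h2 := key H hH
  rw [hGH] at h1
  exact h1.unique h2


theorem tangent_ext {q x : ℍ[ℝ]} (hx : ⟪x, q⟫ = 0)
    (h : ∀ Z : ℍ[ℝ], ⟪Z, q⟫ = 0 → ⟪x, Z⟫ = 0) : x = 0 :=
  inner_self_eq_zero.mp (h x hx)

theorem skew_mul {u : ℍ[ℝ]} (hu : u.re = 0) (x y : ℍ[ℝ]) : ⟪x * u, y⟫ = -⟪y * u, x⟫ := by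
  simp only [Quaternion.inner_def, Quaternion.re_mul, Quaternion.imI_mul, Quaternion.imJ_mul,
    Quaternion.imK_mul, Quaternion.re_star, Quaternion.imI_star,
    Quaternion.imJ_star, Quaternion.imK_star, hu]
  ring

theorem tangent_mul {u : ℍ[ℝ]} (hu : u.re = 0) (q : ℍ[ℝ]) : ⟪q * u, q⟫ = 0 := by
  have := skew_mul hu q q
  linarith

/-- Let `U(q) = q·u` be a left-invariant vector field on the group `S³` of unit
quaternions (`u` a fixed purely imaginary unit quaternion), let `W` be a smooth vector
field tangent to `S³`, and let `G = ∇f` be the (spherical) gradient field of a smooth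
function `f`.  Then the Levi-Civita covariant derivative satisfies `∇_W U = W × U`
(where `×` is the cross product in each tangent space, computed by the triple product),
and `∇⟪U, G⟫ = [U, G]`, the Lie bracket of the vector fields `U` and `G` (computed for
tangent fields as `[U,G](q) = D_{U(q)}G - D_{G(q)}U`). -/
theorem covderiv_leftInvariant_and_grad_inner (u : ℍ[ℝ]) (hu_re : u.re = 0) (hu : ‖u‖ = 1)
    (U : ℍ[ℝ] → ℍ[ℝ]) (hU : ∀ q, U q = q * u)
    (W : ℍ[ℝ] → ℍ[ℝ]) (hWsm : ContDiff ℝ (⊤ : ℕ∞) W) (hWt : ∀ q, ‖q‖ = 1 → ⟪W q, q⟫ = 0)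
    (f : ℍ[ℝ] → ℝ) (hf : ContDiff ℝ (⊤ : ℕ∞) f)
    (G : ℍ[ℝ] → ℍ[ℝ]) (hGsm : ContDiff ℝ (⊤ : ℕ∞) G)
    (hG : ∀ q, ‖q‖ = 1 → ⟪G q, q⟫ = 0 ∧
      ∀ Z : ℍ[ℝ], ⟪Z, q⟫ = 0 → ⟪G q, Z⟫ = fderiv ℝ f q Z) :
    (∀ q : ℍ[ℝ], ‖q‖ = 1 →
      fderiv ℝ U q (W q) - ⟪fderiv ℝ U q (W q), q⟫ • q = tripQ q (W q) (U q)) ∧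
    (∀ q : ℍ[ℝ], ‖q‖ = 1 → ∀ Gr : ℍ[ℝ], ⟪Gr, q⟫ = 0 →
      (∀ Z : ℍ[ℝ], ⟪Z, q⟫ = 0 →
        ⟪Gr, Z⟫ = fderiv ℝ (fun z => ⟪U z, G z⟫) q Z) →
      Gr = fderiv ℝ G q (U q) - fderiv ℝ U q (G q)) := by
  have hUf : U = fun y => y * u := funext hU
  have hUd : ∀ x : ℍ[ℝ], HasFDerivAt U ((ContinuousLinearMap.id ℝ ℍ[ℝ]).smulRight u) x := by
    intro x
    rw [hUf]
    exact (hasFDerivAt_id x).mul_const' u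
  have hUfd : ∀ x z : ℍ[ℝ], fderiv ℝ U x z = z * u := by
    intro x z
    rw [(hUd x).fderiv]
    simp [smul_eq_mul]
  constructor
  · intro q hq
    rw [hUfd q (W q), hU q]
    exact key1 q (W q) u hu_re hq (hWt q hq)
  ·
    -- the Euclidean gradient F of f
    set T : (ℍ[ℝ] →L[ℝ] ℝ) →L[ℝ] ℍ[ℝ] :=
      ((InnerProductSpace.toDual ℝ ℍ[ℝ]).symm.toContinuousLinearEquiv :
        (ℍ[ℝ] →L[ℝ] ℝ) ≃L[ℝ] ℍ[ℝ]).toContinuousLinearMap with hT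
    set F : ℍ[ℝ] → ℍ[ℝ] := fun p => T (fderiv ℝ f p) with hF
    have hFinner : ∀ (p z : ℍ[ℝ]), ⟪F p, z⟫ = fderiv ℝ f p z := by
      intro p z
      exact InnerProductSpace.toDual_symm_apply
    have hf' : ContDiff ℝ (⊤ : ℕ∞) (fderiv ℝ f) := hf.fderiv_right (by simp)
    -- H : the tangential projection of F, globally smooth
    set H : ℍ[ℝ] → ℍ[ℝ] := fun p => F p - ⟪F p, p⟫ • p with hHdef
    -- G agrees with H on the sphere
    have hGH : ∀ p : ℍ[ℝ], ‖p‖ = 1 → G p = H p := by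
      intro p hp
      have hpp : ⟪p, p⟫ = (1:ℝ) := by
        rw [real_inner_self_eq_norm_sq, hp]; norm_num
      have : G p - H p = 0 := by
        apply tangent_ext (q := p)
        · rw [inner_sub_left, (hG p hp).1, hHdef]
          simp only [inner_sub_left, real_inner_smul_left, hpp]
          ring
        · intro Z hZ
          have hpZ : ⟪p, Z⟫ = (0:ℝ) := by rw [real_inner_comm]; exact hZ
          rw [inner_sub_left, (hG p hp).2 Z hZ, hHdef]
          simp only [inner_sub_left, real_inner_smul_left, hpZ, hFinner]
          ring
      exact sub_eq_zero.mp this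
    intro q hq Gr hGrt hGrh
    -- second derivative of f at q and its symmetry
    have hdf : DifferentiableAt ℝ (fderiv ℝ f) q := (hf'.differentiable (by simp)) q
    set f'' : ℍ[ℝ] →L[ℝ] ℍ[ℝ] →L[ℝ] ℝ := fderiv ℝ (fderiv ℝ f) q with hf''
    have hsymm : ∀ v z : ℍ[ℝ], f'' v z = f'' z v := by
      intro v z
      exact second_derivative_symmetric (fun y => ((hf.differentiable (by simp)) y).hasFDerivAt)
        hdf.hasFDerivAt v z
    -- derivative of F
    have hFd : HasFDerivAt F (T.comp f'') q := by
      have h1 : HasFDerivAt (fderiv ℝ f) f'' q := hdf.hasFDerivAt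
      refine HasFDerivAt.comp (𝕜 := ℝ) (f := fderiv ℝ f) (g := ⇑T) (f' := f'') (g' := T) q ?_ ?_
      · exact T.hasFDerivAt
      · exact h1
    -- derivative of H
    have hHd : HasFDerivAt H
        (T.comp f'' - (⟪F q, q⟫ • ContinuousLinearMap.id ℝ ℍ[ℝ] +
          ((fderivInnerCLM ℝ (F q, q)).comp
            ((T.comp f'').prod (ContinuousLinearMap.id ℝ ℍ[ℝ]))).smulRight q)) q :=
      hFd.sub ((hFd.inner ℝ (hasFDerivAt_id q)).smul (hasFDerivAt_id q))
    have hHfd : ∀ v : ℍ[ℝ], fderiv ℝ H q v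
        = T (f'' v) - (⟪F q, q⟫ • v + (⟪F q, v⟫ + ⟪T (f'' v), q⟫) • q) := by
      intro v
      rw [hHd.fderiv]
      simp [fderivInnerCLM_apply]
    have hTinner : ∀ (d : ℍ[ℝ] →L[ℝ] ℝ) (z : ℍ[ℝ]), ⟪T d, z⟫ = d z := by
      intro d z
      exact InnerProductSpace.toDual_symm_apply
    have hqq : ⟪q, q⟫ = (1:ℝ) := by rw [real_inner_self_eq_norm_sq, hq]; norm_num
    -- inner products of fderiv H against q and tangent vectors
    have hHq : ∀ v : ℍ[ℝ], ⟪v, q⟫ = 0 → ⟪fderiv ℝ H q v, q⟫ = -⟪F q, v⟫ := by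
      intro v hv
      rw [hHfd v]
      simp only [inner_sub_left, inner_add_left, real_inner_smul_left, hqq, hv, hTinner]
      ring
    have hHt : ∀ v z : ℍ[ℝ], ⟪z, q⟫ = 0 → ⟪fderiv ℝ H q v, z⟫ = f'' v z - ⟪F q, q⟫ * ⟪v, z⟫ := by
      intro v z hz
      have hqz : ⟪q, z⟫ = (0:ℝ) := by rw [real_inner_comm]; exact hz
      rw [hHfd v]
      simp only [inner_sub_left, inner_add_left, real_inner_smul_left, hqz, hTinner]
      ring
    -- tangency of the relevant vectors
    have htu : ⟪q * u, q⟫ = 0 := tangent_mul hu_re q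
    have htG : ⟪G q, q⟫ = 0 := (hG q hq).1
    -- G and H have equal derivatives in tangent directions
    have hGdiff : DifferentiableAt ℝ G q := (hGsm.differentiable (by simp)) q
    have hGHd : ∀ v : ℍ[ℝ], ⟪v, q⟫ = 0 → fderiv ℝ G q v = fderiv ℝ H q v := by
      intro v hv
      exact tangent_fderiv_eq hq hGdiff hHd.differentiableAt hGH v hv
    -- derivative of the inner product function
    have hIP : ∀ Z : ℍ[ℝ], fderiv ℝ (fun z => ⟪U z, G z⟫) q Z
        = ⟪U q, fderiv ℝ G q Z⟫ + ⟪Z * u, G q⟫ := by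
      intro Z
      have := ((hUd q).inner ℝ hGdiff.hasFDerivAt).fderiv
      rw [this]
      simp [fderivInnerCLM_apply, smul_eq_mul]
    -- the two sides
    set A : ℍ[ℝ] := fderiv ℝ G q (U q) with hA
    have hA' : A = fderiv ℝ H q (q * u) := by rw [hA, hU q, hGHd (q * u) htu]
    have hB : fderiv ℝ U q (G q) = G q * u := hUfd q (G q)
    have hGF : ∀ z : ℍ[ℝ], ⟪z, q⟫ = 0 → ⟪G q, z⟫ = ⟪F q, z⟫ := by
      intro z hz
      have hqz : ⟪q, z⟫ = (0:ℝ) := by rw [real_inner_comm]; exact hz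
      rw [hGH q hq, hHdef]
      simp only [inner_sub_left, real_inner_smul_left, hqz]
      ring
    have key : Gr - (A - G q * u) = 0 := by
      apply tangent_ext (q := q)
      · rw [inner_sub_left, inner_sub_left, hGrt, hA', hHq (q * u) htu]
        have h1 : ⟪G q * u, q⟫ = -⟪q * u, G q⟫ := skew_mul hu_re (G q) q
        have h2 : ⟪q * u, G q⟫ = ⟪G q, q * u⟫ := real_inner_comm _ _
        have h3 : ⟪G q, q * u⟫ = ⟪F q, q * u⟫ := hGF (q * u) htu
        rw [h1, h2, h3]
        ring
      · intro Z hZ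
        rw [inner_sub_left, inner_sub_left, hGrh Z hZ, hIP Z, hGHd Z hZ, hU q]
        have h1 : ⟪q * u, fderiv ℝ H q Z⟫ = ⟪fderiv ℝ H q Z, q * u⟫ := real_inner_comm _ _
        rw [h1, hHt Z (q * u) htu, hA', hHt (q * u) Z hZ]
        have h2 : ⟪G q * u, Z⟫ = -⟪Z * u, G q⟫ := skew_mul hu_re (G q) Z
        have h3 : ⟪Z, q * u⟫ = ⟪q * u, Z⟫ := real_inner_comm _ _
        rw [h2, h3, hsymm Z (q * u)]
        ring
    rw [hB]
    exact sub_eq_zero.mp key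
end
end

section
/- Every left-invariant vector field U on the unit quaternion group S^3 with the round metric is divergence-free and satisfies curl U = -2U. -/
open scoped RealInnerProductSpace Quaternion

noncomputable section

/-! Left translation by a unit quaternion is an orientation-preserving isometry of `ℍ ≅ ℝ⁴`
(its matrix has determinant `‖q‖⁴`), so tangent vectors at `q` are `q b` with `b` imaginary and
both sides of the curl identity reduce to the identity element, where each equals
`-2 det(1, b, c, u)`. The divergence vanishes because `⟪X u, X⟫ = ‖X‖² re u`. -/

open Matrix Quaternion

theorem fderiv_mul_const_apply {𝕜 𝔸 : Type*} [NontriviallyNormedField 𝕜] [NormedRing 𝔸]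
    [NormedAlgebra 𝕜 𝔸] (u x v : 𝔸) : fderiv 𝕜 (fun y => y * u) x v = v * u := by
  rw [fderiv_mul_const' (a := fun y => y) differentiableAt_fun_id u]
  simp

theorem Matrix.det_updateRow_eq_sum {n R : Type*} [Fintype n] [DecidableEq n] [CommRing R]
    (M : Matrix n n R) (i : n) (v : n → R) :
    (M.updateRow i v).det = ∑ k, v k * (M.updateRow i (Pi.single k 1)).det := by
  let f := (detRowAlternating (n := n) (R := R)).toMultilinearMap.toLinearMap M i
  have h : ∀ w, (M.updateRow i w).det = f w := fun w => rfl
  rw [h, LinearMap.pi_apply_eq_sum_univ f v]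
  refine Finset.sum_congr rfl fun k _ => ?_
  rw [smul_eq_mul, h]
  congr 2
  ext j
  simp [Pi.single_apply, eq_comm]

theorem Matrix.of_mulVec_row_eq_mul_transpose {m n R : Type*} [Fintype n] [CommSemiring R]
    (L : Matrix n n R) (M : Matrix m n R) : of (fun i => L *ᵥ M i) = M * Lᵀ := by
  ext i j
  simp [mul_apply, mulVec, dotProduct, mul_comm]

namespace Quaternion

theorem inner_mul_left (p a b : ℍ[ℝ]) : ⟪p * a, p * b⟫ = normSq p * ⟪a, b⟫ := by
  simp only [inner_def, normSq_def', star_mul, re_mul, imI_mul, imJ_mul, imK_mul, re_star,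
    imI_star, imJ_star, imK_star]
  ring

theorem inner_mul_self_eq_normSq_mul_re (a u : ℍ[ℝ]) : ⟪a * u, a⟫ = normSq a * u.re := by
  simpa [inner_def] using inner_mul_left a u 1

theorem exists_re_eq_zero_and_eq_mul_of_inner_eq_zero {q B : ℍ[ℝ]} (hq : normSq q = 1)
    (hB : ⟪B, q⟫ = 0) : ∃ b : ℍ[ℝ], b.re = 0 ∧ B = q * b := by
  refine ⟨star q * B, ?_, ?_⟩
  · simp only [inner_def, re_mul, re_star, imI_star, imJ_star, imK_star] at hB ⊢
    linarith
  · rw [← mul_assoc, self_mul_star, hq, coe_one, one_mul]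

end Quaternion

theorem inner_eq_sum_qCoords (a b : ℍ[ℝ]) : ⟪a, b⟫ = ∑ k, qCoords a k * qCoords b k := by
  simp [inner_def, Fin.sum_univ_four, qCoords]

def quatVol (a b c d : ℍ[ℝ]) : ℝ := (of ![qCoords a, qCoords b, qCoords c, qCoords d]).det

theorem inner_tripQ (a b c x : ℍ[ℝ]) : ⟪tripQ a b c, x⟫ = quatVol a b c x := by
  have hrow : ∀ v, of ![qCoords a, qCoords b, qCoords c, v] =
      (of ![qCoords a, qCoords b, qCoords c, 0]).updateRow 3 v := by
    intro v
    ext i j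
    fin_cases i <;> rfl
  have hcoord : ∀ k, qCoords (tripQ a b c) k =
      (of ![qCoords a, qCoords b, qCoords c, Pi.single k 1]).det := by
    intro k
    fin_cases k <;> rfl
  rw [real_inner_comm, inner_eq_sum_qCoords, quatVol, hrow, det_updateRow_eq_sum]
  simp only [hcoord, ← hrow]

def quatLeftMulMatrix (p : ℍ[ℝ]) : Matrix (Fin 4) (Fin 4) ℝ :=
  !![p.re, -p.imI, -p.imJ, -p.imK;
     p.imI, p.re, -p.imK, p.imJ;
     p.imJ, p.imK, p.re, -p.imI;
     p.imK, -p.imJ, p.imI, p.re]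

theorem qCoords_mul (p x : ℍ[ℝ]) : qCoords (p * x) = quatLeftMulMatrix p *ᵥ qCoords x := by
  ext k
  fin_cases k <;> simp [quatLeftMulMatrix, mulVec, dotProduct, Fin.sum_univ_four, qCoords] <;> ring

theorem det_quatLeftMulMatrix (p : ℍ[ℝ]) : (quatLeftMulMatrix p).det = normSq p ^ 2 := by
  rw [quatLeftMulMatrix, det_succ_row_zero]
  simp [Fin.sum_univ_succ, det_succ_row_zero, Fin.succAbove, normSq_def']
  ring

theorem quatVol_mul_left (p a b c d : ℍ[ℝ]) :
    quatVol (p * a) (p * b) (p * c) (p * d) = normSq p ^ 2 * quatVol a b c d := by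
  have hrows : of ![qCoords (p * a), qCoords (p * b), qCoords (p * c), qCoords (p * d)] =
      of (fun i => quatLeftMulMatrix p *ᵥ (of ![qCoords a, qCoords b, qCoords c, qCoords d]) i) := by
    simp only [qCoords_mul]
    ext i j
    fin_cases i <;> rfl
  rw [quatVol, hrows, of_mulVec_row_eq_mul_transpose, det_mul, det_transpose,
    det_quatLeftMulMatrix, mul_comm]
  rfl

theorem inner_mul_sub_inner_mul_of_re_eq_zero {b c u : ℍ[ℝ]} (hb : b.re = 0) (hc : c.re = 0)
    (hu : u.re = 0) : ⟪b * u, c⟫ - ⟪c * u, b⟫ = -2 * quatVol 1 b c u := by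
  simp [inner_def, quatVol, qCoords, det_succ_row_zero, Fin.sum_univ_succ, Fin.succAbove,
    hb, hc, hu]
  ring

theorem inner_smul_mul_tripQ_mul_mul {q b c u : ℍ[ℝ]} (hq : normSq q = 1) (hb : b.re = 0)
    (hc : c.re = 0) (hu : u.re = 0) :
    ⟪(-2 : ℝ) • (q * u), tripQ q (q * b) (q * c)⟫ = ⟪q * b * u, q * c⟫ - ⟪q * c * u, q * b⟫ :=
  calc ⟪(-2 : ℝ) • (q * u), tripQ q (q * b) (q * c)⟫
      = -2 * quatVol (q * 1) (q * b) (q * c) (q * u) := by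
        rw [real_inner_smul_left, real_inner_comm, inner_tripQ, mul_one]
    _ = -2 * quatVol 1 b c u := by rw [quatVol_mul_left, hq, one_pow, one_mul]
    _ = ⟪b * u, c⟫ - ⟪c * u, b⟫ := (inner_mul_sub_inner_mul_of_re_eq_zero hb hc hu).symm
    _ = ⟪q * b * u, q * c⟫ - ⟪q * c * u, q * b⟫ := by
        rw [mul_assoc, mul_assoc, inner_mul_left, inner_mul_left, hq, one_mul, one_mul]

/-- The divergence at `q` is `∑ ⟪∇_{bᵢ} U, bᵢ⟫` over an orthonormal basis of `T_qS³`; the curl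
at `q` is the tangent vector `c` with `⟪c, B × C⟫ = ⟪∇_B U, C⟫ - ⟪∇_C U, B⟫` for tangent `B, C`. -/
theorem leftInvariant_divergenceFree_and_curl (u : ℍ[ℝ]) (hu : u.re = 0)
    (U : ℍ[ℝ] → ℍ[ℝ]) (hU : ∀ q, U q = q * u) (q : ℍ[ℝ]) (hq : ‖q‖ = 1) :
    (∀ b : Fin 3 → ℍ[ℝ], (∀ i, ⟪b i, q⟫ = 0) →
      (∀ i j, ⟪b i, b j⟫ = if i = j then (1 : ℝ) else 0) →
      ∑ i, ⟪fderiv ℝ U q (b i), b i⟫ = 0) ∧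
    (∀ B C : ℍ[ℝ], ⟪B, q⟫ = 0 → ⟪C, q⟫ = 0 →
      ⟪(-2 : ℝ) • U q, tripQ q B C⟫ = ⟪fderiv ℝ U q B, C⟫ - ⟪fderiv ℝ U q C, B⟫) := by
  obtain rfl : U = fun p => p * u := funext hU
  have hq' : normSq q = 1 := by rw [normSq_eq_norm_mul_self, hq, one_mul]
  refine ⟨fun b _ _ => ?_, fun B C hB hC => ?_⟩
  · simp only [fderiv_mul_const_apply, inner_mul_self_eq_normSq_mul_re, hu, mul_zero,
      Finset.sum_const_zero]
  · obtain ⟨b, hb, rfl⟩ := exists_re_eq_zero_and_eq_mul_of_inner_eq_zero hq' hB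
    obtain ⟨c, hc, rfl⟩ := exists_re_eq_zero_and_eq_mul_of_inner_eq_zero hq' hC
    simpa only [fderiv_mul_const_apply] using inner_smul_mul_tripQ_mul_mul hq' hb hc hu
end
end
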